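/- arXiv:2412.02226 — 2 statements merged into one kernel-verified Lean document; each statement's English description precedes it below -/
import Mathlib

section
/- Let S : ℝ² → ℝ be a smooth function of (x,t) satisfying the heat equation ∂_t S = ∂_x² S, and let F : ℝ → ℝ be a smooth function of y such that S(x,t) + F(y) ≠ 0 for all (x,y,t). Define W(x,y,t) = S(x,t) + F(y), u = -W_x/W, v = W_y/W, and V = W_x/W (i.e. u = -∂_x ln W, v = ∂_y ln W, V = ∂_x ln W when W > 0). Then (u, v, V) satisfy the coupled Davey–Stewartson-type system associated with the Volterra lattice: ∂_t u = ∂_x² u + ∂_x(u² + 2uV), ∂_t v = -∂_x² v + ∂_y(V²) + ∂_x(2uv), and ∂_y V = ∂_x v, everywhere on ℝ³. -/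
noncomputable section

/-- `∂/∂x` for a function of `(x, t)`. -/
def dx2 (f : ℝ → ℝ → ℝ) : ℝ → ℝ → ℝ := fun x t => deriv (fun s => f s t) x

/-- `∂/∂t` for a function of `(x, t)`. -/
def dt2 (f : ℝ → ℝ → ℝ) : ℝ → ℝ → ℝ := fun x t => deriv (fun s => f x s) t

/-- `∂/∂x` for a function of `(x, y, t)`. -/
def dx3 (f : ℝ → ℝ → ℝ → ℝ) : ℝ → ℝ → ℝ → ℝ := fun x y t => deriv (fun s => f s y t) x

/-- `∂/∂y` for a function of `(x, y, t)`. -/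
def dy3 (f : ℝ → ℝ → ℝ → ℝ) : ℝ → ℝ → ℝ → ℝ := fun x y t => deriv (fun s => f x s t) y

/-- `∂/∂t` for a function of `(x, y, t)`. -/
def dt3 (f : ℝ → ℝ → ℝ → ℝ) : ℝ → ℝ → ℝ → ℝ := fun x y t => deriv (fun s => f x y s) t


lemma hasDerivAt_fst (g : ℝ → ℝ → ℝ) (hg : ContDiff ℝ (⊤ : ℕ∞) ↿g) (x t : ℝ) :
    HasDerivAt (fun s => g s t) (fderiv ℝ ↿g (x, t) (1, 0)) x := by
  have h1 : HasFDerivAt ↿g (fderiv ℝ ↿g (x, t)) (x, t) :=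
    (hg.differentiable (by simp) (x, t)).hasFDerivAt
  have h2 : HasDerivAt (fun s : ℝ => ((s, t) : ℝ × ℝ)) ((1 : ℝ), (0 : ℝ)) x :=
    (hasDerivAt_id x).prodMk (hasDerivAt_const x t)
  exact h1.comp_hasDerivAt x h2

lemma hasDerivAt_snd (g : ℝ → ℝ → ℝ) (hg : ContDiff ℝ (⊤ : ℕ∞) ↿g) (x t : ℝ) :
    HasDerivAt (fun τ => g x τ) (fderiv ℝ ↿g (x, t) (0, 1)) t := by
  have h1 : HasFDerivAt ↿g (fderiv ℝ ↿g (x, t)) (x, t) :=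
    (hg.differentiable (by simp) (x, t)).hasFDerivAt
  have h2 : HasDerivAt (fun τ : ℝ => ((x, τ) : ℝ × ℝ)) ((0 : ℝ), (1 : ℝ)) t :=
    (hasDerivAt_const t x).prodMk (hasDerivAt_id t)
  exact h1.comp_hasDerivAt t h2

lemma uncurry_dx2 (g : ℝ → ℝ → ℝ) (hg : ContDiff ℝ (⊤ : ℕ∞) ↿g) :
    ↿(dx2 g) = fun p : ℝ × ℝ => fderiv ℝ ↿g p (1, 0) := by
  funext p
  exact (hasDerivAt_fst g hg p.1 p.2).deriv

lemma contDiff_uncurry_dx2 (g : ℝ → ℝ → ℝ) (hg : ContDiff ℝ (⊤ : ℕ∞) ↿g) :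
    ContDiff ℝ (⊤ : ℕ∞) ↿(dx2 g) := by
  rw [uncurry_dx2 g hg]
  exact (hg.fderiv_right (by simp)).clm_apply contDiff_const

lemma mixed (S : ℝ → ℝ → ℝ) (hS : ContDiff ℝ (⊤ : ℕ∞) ↿S)
    (heat : ∀ x t, dt2 S x t = dx2 (dx2 S) x t) (x t : ℝ) :
    HasDerivAt (fun τ => dx2 S x τ) (dx2 (dx2 (dx2 S)) x t) t := by
  have h := hasDerivAt_snd (dx2 S) (contDiff_uncurry_dx2 S hS) x t
  suffices key : fderiv ℝ ↿(dx2 S) (x, t) (0, 1) = dx2 (dx2 (dx2 S)) x t by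
    rwa [key] at h
  set f := ↿S with hf
  have hdiff : ∀ p : ℝ × ℝ, HasFDerivAt f (fderiv ℝ f p) p :=
    fun p => (hS.differentiable (by simp) p).hasFDerivAt
  have hf' : ContDiff ℝ (⊤ : ℕ∞) (fderiv ℝ f) := hS.fderiv_right (by simp)
  have hx : HasFDerivAt (fderiv ℝ f) (fderiv ℝ (fderiv ℝ f) (x, t)) (x, t) :=
    (hf'.differentiable (by simp) (x, t)).hasFDerivAt
  have symm := second_derivative_symmetric hdiff hx
  -- step 1 : fderiv ↿(dx2 S) (x,t) (0,1) = f'' (0,1) (1,0)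
  have e1 : fderiv ℝ ↿(dx2 S) (x, t) (0, 1)
      = fderiv ℝ (fderiv ℝ f) (x, t) (0, 1) (1, 0) := by
    rw [uncurry_dx2 S hS]
    have := fderiv_clm_apply (𝕜 := ℝ)
      (c := fderiv ℝ f) (u := fun _ : ℝ × ℝ => ((1 : ℝ), (0 : ℝ)))
      (x := (x, t)) (hf'.differentiable (by simp) (x, t)) (differentiableAt_const _)
    rw [this]
    simp
  -- step 2 : the other mixed partial equals dx2 (dx2 (dx2 S))
  have e2 : fderiv ℝ (fderiv ℝ f) (x, t) (1, 0) (0, 1) = dx2 (dx2 (dx2 S)) x t := by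
    have hg : ContDiff ℝ (⊤ : ℕ∞) ↿(fun a b : ℝ => fderiv ℝ f (a, b) (0, 1)) := by
      exact (hf'.clm_apply contDiff_const : ContDiff ℝ (⊤ : ℕ∞) fun p : ℝ × ℝ => fderiv ℝ f p (0, 1))
    have h2 := hasDerivAt_fst (fun a b : ℝ => fderiv ℝ f (a, b) (0, 1)) hg x t
    have e3 : (fun s : ℝ => fderiv ℝ f (s, t) (0, 1)) = fun s => dx2 (dx2 S) s t := by
      funext s
      have := (hasDerivAt_snd S hS s t).deriv
      calc fderiv ℝ f (s, t) (0, 1) = dt2 S s t := this.symm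
        _ = dx2 (dx2 S) s t := heat s t
    rw [e3] at h2
    have e4 : fderiv ℝ ↿(fun a b : ℝ => fderiv ℝ f (a, b) (0, 1)) (x, t) (1, 0)
        = fderiv ℝ (fderiv ℝ f) (x, t) (1, 0) (0, 1) := by
      have huc : ↿(fun a b : ℝ => fderiv ℝ f (a, b) (0, 1))
          = fun p : ℝ × ℝ => fderiv ℝ f p (0, 1) := rfl
      rw [huc]
      have := fderiv_clm_apply (𝕜 := ℝ)
        (c := fderiv ℝ f) (u := fun _ : ℝ × ℝ => ((0 : ℝ), (1 : ℝ)))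
        (x := (x, t)) (hf'.differentiable (by simp) (x, t)) (differentiableAt_const _)
      rw [this]
      simp
    rw [e4] at h2
    exact (h2.deriv).symm ▸ rfl
  rw [e1, symm, e2]

/-- If `S(x,t)` is a smooth solution of the heat equation `S_t = S_xx`,
`F(y)` is smooth, and `W = S + F` never vanishes, then `u = -W_x/W`, `v = W_y/W`,
`V = W_x/W` solve the Davey–Stewartson-type coupled system associated with the
Volterra lattice: `u_t = u_xx + (u² + 2uV)_x`, `v_t = -v_xx + (V²)_y + (2uv)_x`,
`V_y = v_x`. -/
theorem stmt0
    (S : ℝ → ℝ → ℝ) (F : ℝ → ℝ)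
    (hS : ContDiff ℝ (⊤ : ℕ∞) ↿S) (hF : ContDiff ℝ (⊤ : ℕ∞) F)
    (heat : ∀ x t, dt2 S x t = dx2 (dx2 S) x t)
    (hne : ∀ x y t, S x t + F y ≠ 0)
    (W u v V : ℝ → ℝ → ℝ → ℝ)
    (hW : ∀ x y t, W x y t = S x t + F y)
    (hu : ∀ x y t, u x y t = -(dx3 W x y t) / W x y t)
    (hv : ∀ x y t, v x y t = dy3 W x y t / W x y t)
    (hV : ∀ x y t, V x y t = dx3 W x y t / W x y t) :
    (∀ x y t, dt3 u x y t
        = dx3 (dx3 u) x y t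
          + dx3 (fun x y t => (u x y t) ^ 2 + 2 * u x y t * V x y t) x y t) ∧
    (∀ x y t, dt3 v x y t
        = -(dx3 (dx3 v) x y t)
          + dy3 (fun x y t => (V x y t) ^ 2) x y t
          + dx3 (fun x y t => 2 * u x y t * v x y t) x y t) ∧
    (∀ x y t, dy3 V x y t = dx3 v x y t) := by
  -- basic derivative facts
  have hdx : ∀ x t, HasDerivAt (fun s => S s t) (dx2 S x t) x := by
    intro x t
    have h := hasDerivAt_fst S hS x t
    rwa [← h.deriv] at h
  have hSx := contDiff_uncurry_dx2 S hS
  have hSxx := contDiff_uncurry_dx2 (dx2 S) hSx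
  have hdxx : ∀ x t, HasDerivAt (fun s => dx2 S s t) (dx2 (dx2 S) x t) x := by
    intro x t
    have h := hasDerivAt_fst (dx2 S) hSx x t
    rwa [← h.deriv] at h
  have hdxxx : ∀ x t, HasDerivAt (fun s => dx2 (dx2 S) s t) (dx2 (dx2 (dx2 S)) x t) x := by
    intro x t
    have h := hasDerivAt_fst (dx2 (dx2 S)) hSxx x t
    rwa [← h.deriv] at h
  have hdt : ∀ x t, HasDerivAt (fun τ => S x τ) (dx2 (dx2 S) x t) t := by
    intro x t
    have h := hasDerivAt_snd S hS x t
    have e : fderiv ℝ ↿S (x, t) (0, 1) = dx2 (dx2 S) x t := by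
      rw [← heat x t]; exact h.deriv.symm
    rwa [e] at h
  have hdxt : ∀ x t, HasDerivAt (fun τ => dx2 S x τ) (dx2 (dx2 (dx2 S)) x t) t :=
    mixed S hS heat
  have hF' : ∀ y, HasDerivAt F (deriv F y) y :=
    fun y => (hF.differentiable (by simp) y).hasDerivAt
  -- closed forms for u, v, V
  have hWx : ∀ x y t, dx3 W x y t = dx2 S x t := by
    intro x t y
    show deriv (fun s => W s t y) x = _
    have e : (fun s => W s t y) = fun s => S s y + F t := funext fun s => hW s t y
    rw [e]
    exact ((hdx x y).add_const (F t)).deriv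
  have hWy : ∀ x y t, dy3 W x y t = deriv F y := by
    intro x y t
    show deriv (fun s => W x s t) y = _
    have e : (fun s => W x s t) = fun s => S x t + F s := funext fun s => hW x s t
    rw [e]
    exact ((hF' y).const_add (S x t)).deriv
  have hu' : ∀ x y t, u x y t = -dx2 S x t / (S x t + F y) := by
    intro x y t; rw [hu, hWx, hW]
  have hv' : ∀ x y t, v x y t = deriv F y / (S x t + F y) := by
    intro x y t; rw [hv, hWy, hW]
  have hV' : ∀ x y t, V x y t = dx2 S x t / (S x t + F y) := by
    intro x y t; rw [hV, hWx, hW]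
  refine ⟨?_, ?_, ?_⟩
  · -- first equation
    intro x y t
    have hW0 := hne x y t
    have dut : HasDerivAt (fun τ => u x y τ)
        ((-(dx2 (dx2 (dx2 S)) x t) * (S x t + F y) - -(dx2 S x t) * dx2 (dx2 S) x t)
          / (S x t + F y) ^ 2) t := by
      have e : (fun τ => u x y τ) = fun τ => -dx2 S x τ / (S x τ + F y) :=
        funext fun τ => hu' x y τ
      rw [e]
      exact (hdxt x t).neg.div ((hdt x t).add_const (F y)) hW0
    have hux : ∀ s, dx3 u s y t
        = (-(dx2 (dx2 S) s t) * (S s t + F y) - -(dx2 S s t) * dx2 S s t)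
          / (S s t + F y) ^ 2 := by
      intro s
      show deriv (fun r => u r y t) s = _
      have e : (fun r => u r y t) = fun r => -dx2 S r t / (S r t + F y) :=
        funext fun r => hu' r y t
      rw [e]
      exact ((hdxx s t).neg.div ((hdx s t).add_const (F y)) (hne s y t)).deriv
    have duxx := (((hdxxx x t).fun_neg.fun_mul ((hdx x t).add_const (F y))).fun_sub
          ((hdxx x t).fun_neg.fun_mul (hdxx x t))).fun_div
        (((hdx x t).add_const (F y)).fun_pow 2) (pow_ne_zero 2 hW0)
    have hnl : ∀ s, u s y t ^ 2 + 2 * u s y t * V s y t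
        = -(dx2 S s t ^ 2) / (S s t + F y) ^ 2 := by
      intro s
      rw [hu' s y t, hV' s y t]
      have h0 := hne s y t
      field_simp
      ring
    have dnl := (((hdxx x t).fun_pow 2).fun_neg.fun_div (((hdx x t).add_const (F y)).fun_pow 2)
        (pow_ne_zero 2 hW0))
    show deriv (fun τ => u x y τ) t
        = deriv (fun s => dx3 u s y t) x
          + deriv (fun s => u s y t ^ 2 + 2 * u s y t * V s y t) x
    rw [dut.deriv, show (fun s => dx3 u s y t) = _ from funext hux, duxx.deriv,
      show (fun s => u s y t ^ 2 + 2 * u s y t * V s y t) = _ from funext hnl, dnl.deriv]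
    norm_num
    field_simp
    ring
  · -- second equation
    intro x y t
    have hW0 := hne x y t
    have dvt : HasDerivAt (fun τ => v x y τ)
        ((0 * (S x t + F y) - deriv F y * dx2 (dx2 S) x t) / (S x t + F y) ^ 2) t := by
      have e : (fun τ => v x y τ) = fun τ => deriv F y / (S x τ + F y) :=
        funext fun τ => hv' x y τ
      rw [e]
      exact (hasDerivAt_const t (deriv F y)).div ((hdt x t).add_const (F y)) hW0
    have hvx : ∀ s, dx3 v s y t
        = (0 * (S s t + F y) - deriv F y * dx2 S s t) / (S s t + F y) ^ 2 := by
      intro s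
      show deriv (fun r => v r y t) s = _
      have e : (fun r => v r y t) = fun r => deriv F y / (S r t + F y) :=
        funext fun r => hv' r y t
      rw [e]
      exact ((hasDerivAt_const s (deriv F y)).div ((hdx s t).add_const (F y))
        (hne s y t)).deriv
    have dvxx := (((hasDerivAt_const x (0 : ℝ)).fun_mul ((hdx x t).add_const (F y))).fun_sub
          ((hdxx x t).const_mul (deriv F y))).fun_div
        (((hdx x t).add_const (F y)).fun_pow 2) (pow_ne_zero 2 hW0)
    have hVy : ∀ s, V x s t ^ 2 = (dx2 S x t / (S x t + F s)) ^ 2 := by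
      intro s; rw [hV' x s t]
    have dVsq := ((hasDerivAt_const y (dx2 S x t)).fun_div ((hF' y).const_add (S x t)) hW0).fun_pow 2
    have huv : ∀ s, 2 * u s y t * v s y t
        = -2 * deriv F y * dx2 S s t / (S s t + F y) ^ 2 := by
      intro s
      rw [hu' s y t, hv' s y t]
      have h0 := hne s y t
      field_simp
    have duv := ((hdxx x t).const_mul (-2 * deriv F y)).fun_div
        (((hdx x t).add_const (F y)).fun_pow 2) (pow_ne_zero 2 hW0)
    show deriv (fun τ => v x y τ) t
        = -(deriv (fun s => dx3 v s y t) x)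
          + deriv (fun s => V x s t ^ 2) y
          + deriv (fun s => 2 * u s y t * v s y t) x
    rw [dvt.deriv, show (fun s => dx3 v s y t) = _ from funext hvx, dvxx.deriv,
      show (fun s => V x s t ^ 2) = _ from funext hVy, dVsq.deriv,
      show (fun s => 2 * u s y t * v s y t) = _ from funext huv, duv.deriv]
    norm_num
    field_simp
    ring
  · -- third equation
    intro x y t
    have hW0 := hne x y t
    show deriv (fun s => V x s t) y = deriv (fun s => v s y t) x
    have e1 : (fun s => V x s t) = fun s => dx2 S x t / (S x t + F s) :=
      funext fun s => hV' x s t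
    have e2 : (fun s => v s y t) = fun s => deriv F y / (S s t + F y) :=
      funext fun s => hv' s y t
    rw [e1, e2,
      ((hasDerivAt_const y (dx2 S x t)).fun_div ((hF' y).const_add (S x t)) hW0).deriv,
      ((hasDerivAt_const x (deriv F y)).fun_div ((hdx x t).add_const (F y)) hW0).deriv]
    ring
end
end

section
/- Let W : ℝ³ → ℝ be a smooth nonvanishing function of (x,y,t) satisfying ∂_x ∂_y W = 0 together with the system W·W_ty = W_y·W_t - W_xx·W_y and W·W_tx = W·W_xxx + W_x·W_t - W_x·W_xx. Then the functions u = -W_x/W and v = W_y/W satisfy the coupled system ∂_t u = ∂_x² u - 2u ∂_x u and ∂_t v = -∂_x² v + 2u ∂_y u + 2 ∂_x(uv). -/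
noncomputable section

abbrev Pt3 := ℝ × ℝ × ℝ
def Dv (e : Pt3) (f : Pt3 → ℝ) : Pt3 → ℝ := fun p => fderiv ℝ f p e

lemma Dv_contDiff {f : Pt3 → ℝ} (hf : ContDiff ℝ (⊤ : ℕ∞) f) (e : Pt3) : ContDiff ℝ (⊤ : ℕ∞) (Dv e f) :=
  (hf.fderiv_right (by simp)).clm_apply contDiff_const

lemma sliceX {f : Pt3 → ℝ} (hf : ContDiff ℝ (⊤ : ℕ∞) f) (x y t : ℝ) :
    HasDerivAt (fun s => f (s, y, t)) (Dv (1,0,0) f (x,y,t)) x := by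
  have h1 : HasDerivAt (fun s : ℝ => ((s, y, t) : Pt3)) (1, 0, 0) x :=
    (hasDerivAt_id x).prodMk (hasDerivAt_const _ _)
  have h2 := (hf.differentiable (by simp) (x,y,t)).hasFDerivAt
  exact h2.comp_hasDerivAt x h1

lemma sliceY {f : Pt3 → ℝ} (hf : ContDiff ℝ (⊤ : ℕ∞) f) (x y t : ℝ) :
    HasDerivAt (fun s => f (x, s, t)) (Dv (0,1,0) f (x,y,t)) y := by
  have h1 : HasDerivAt (fun s : ℝ => ((x, s, t) : Pt3)) (0, 1, 0) y :=
    (hasDerivAt_const _ _).prodMk ((hasDerivAt_id y).prodMk (hasDerivAt_const _ _))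
  have h2 := (hf.differentiable (by simp) (x,y,t)).hasFDerivAt
  exact h2.comp_hasDerivAt y h1

lemma sliceT {f : Pt3 → ℝ} (hf : ContDiff ℝ (⊤ : ℕ∞) f) (x y t : ℝ) :
    HasDerivAt (fun s => f (x, y, s)) (Dv (0,0,1) f (x,y,t)) t := by
  have h1 : HasDerivAt (fun s : ℝ => ((x, y, s) : Pt3)) (0, 0, 1) t :=
    (hasDerivAt_const _ _).prodMk ((hasDerivAt_const _ _).prodMk (hasDerivAt_id t))
  have h2 := (hf.differentiable (by simp) (x,y,t)).hasFDerivAt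
  exact h2.comp_hasDerivAt t h1

lemma Dv_comm {f : Pt3 → ℝ} (hf : ContDiff ℝ (⊤ : ℕ∞) f) (a b p) : Dv a (Dv b f) p = Dv b (Dv a f) p := by
  have hd : ∀ q, HasFDerivAt f (fderiv ℝ f q) q := fun q => (hf.differentiable (by simp) q).hasFDerivAt
  have hd2 : HasFDerivAt (fderiv ℝ f) (fderiv ℝ (fderiv ℝ f) p) p :=
    (((hf.fderiv_right (m := (⊤ : ℕ∞)) (by simp)).differentiable (by simp)) p).hasFDerivAt
  have hsymm := second_derivative_symmetric hd hd2 a b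
  have key : ∀ c d : Pt3, Dv c (Dv d f) p = fderiv ℝ (fderiv ℝ f) p c d := by
    intro c d
    have h := hd2.clm_apply (hasFDerivAt_const d p)
    have h2 : Dv d f = fun y => (fderiv ℝ f y) d := rfl
    simp only [Dv, h2, h.fderiv]
    simp
  rw [key a b, key b a, hsymm]

lemma dx3_eqD {f : ℝ → ℝ → ℝ → ℝ} {G : Pt3 → ℝ} (hG : ContDiff ℝ (⊤ : ℕ∞) G)
    (hf : ∀ x y t, f x y t = G (x,y,t)) (x y t : ℝ) :
    dx3 f x y t = Dv (1,0,0) G (x,y,t) := by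
  have h : (fun s => f s y t) = fun s => G (s,y,t) := funext fun s => hf s y t
  unfold dx3; rw [h]; exact (sliceX hG x y t).deriv

lemma dy3_eqD {f : ℝ → ℝ → ℝ → ℝ} {G : Pt3 → ℝ} (hG : ContDiff ℝ (⊤ : ℕ∞) G)
    (hf : ∀ x y t, f x y t = G (x,y,t)) (x y t : ℝ) :
    dy3 f x y t = Dv (0,1,0) G (x,y,t) := by
  have h : (fun s => f x s t) = fun s => G (x,s,t) := funext fun s => hf x s t
  unfold dy3; rw [h]; exact (sliceY hG x y t).deriv

lemma dt3_eqD {f : ℝ → ℝ → ℝ → ℝ} {G : Pt3 → ℝ} (hG : ContDiff ℝ (⊤ : ℕ∞) G)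
    (hf : ∀ x y t, f x y t = G (x,y,t)) (x y t : ℝ) :
    dt3 f x y t = Dv (0,0,1) G (x,y,t) := by
  have h : (fun s => f x y s) = fun s => G (x,y,s) := funext fun s => hf x y s
  unfold dt3; rw [h]; exact (sliceT hG x y t).deriv

lemma dx3_rat {f : ℝ → ℝ → ℝ → ℝ} {P Q : Pt3 → ℝ} (hP : ContDiff ℝ (⊤ : ℕ∞) P) (hQ : ContDiff ℝ (⊤ : ℕ∞) Q)
    (hQne : ∀ q, Q q ≠ 0) (hf : ∀ x y t, f x y t = P (x,y,t) / Q (x,y,t)) (x y t : ℝ) :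
    dx3 f x y t = (Dv (1,0,0) P (x,y,t) * Q (x,y,t) - P (x,y,t) * Dv (1,0,0) Q (x,y,t))
      / Q (x,y,t) ^ 2 := by
  have h : (fun s => f s y t) = fun s => P (s,y,t) / Q (s,y,t) := funext fun s => hf s y t
  unfold dx3; rw [h]
  exact ((sliceX hP x y t).div (sliceX hQ x y t) (hQne _)).deriv

lemma dy3_rat {f : ℝ → ℝ → ℝ → ℝ} {P Q : Pt3 → ℝ} (hP : ContDiff ℝ (⊤ : ℕ∞) P) (hQ : ContDiff ℝ (⊤ : ℕ∞) Q)
    (hQne : ∀ q, Q q ≠ 0) (hf : ∀ x y t, f x y t = P (x,y,t) / Q (x,y,t)) (x y t : ℝ) :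
    dy3 f x y t = (Dv (0,1,0) P (x,y,t) * Q (x,y,t) - P (x,y,t) * Dv (0,1,0) Q (x,y,t))
      / Q (x,y,t) ^ 2 := by
  have h : (fun s => f x s t) = fun s => P (x,s,t) / Q (x,s,t) := funext fun s => hf x s t
  unfold dy3; rw [h]
  exact ((sliceY hP x y t).div (sliceY hQ x y t) (hQne _)).deriv

lemma dt3_rat {f : ℝ → ℝ → ℝ → ℝ} {P Q : Pt3 → ℝ} (hP : ContDiff ℝ (⊤ : ℕ∞) P) (hQ : ContDiff ℝ (⊤ : ℕ∞) Q)
    (hQne : ∀ q, Q q ≠ 0) (hf : ∀ x y t, f x y t = P (x,y,t) / Q (x,y,t)) (x y t : ℝ) :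
    dt3 f x y t = (Dv (0,0,1) P (x,y,t) * Q (x,y,t) - P (x,y,t) * Dv (0,0,1) Q (x,y,t))
      / Q (x,y,t) ^ 2 := by
  have h : (fun s => f x y s) = fun s => P (x,y,s) / Q (x,y,s) := funext fun s => hf x y s
  unfold dt3; rw [h]
  exact ((sliceT hP x y t).div (sliceT hQ x y t) (hQne _)).deriv

lemma Dv_neg {P : Pt3 → ℝ} (e p) : Dv e (fun q => -P q) p = -(Dv e P p) := by
  simp [Dv, fderiv_neg]

lemma Dv_mul {P Q : Pt3 → ℝ} (hP : ContDiff ℝ (⊤ : ℕ∞) P) (hQ : ContDiff ℝ (⊤ : ℕ∞) Q) (e p) :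
    Dv e (fun q => P q * Q q) p = Dv e P p * Q p + P p * Dv e Q p := by
  simp only [Dv]
  rw [fderiv_fun_mul (hP.differentiable (by simp) p) (hQ.differentiable (by simp) p)]
  simp; ring

lemma Dv_sub {P Q : Pt3 → ℝ} (hP : ContDiff ℝ (⊤ : ℕ∞) P) (hQ : ContDiff ℝ (⊤ : ℕ∞) Q) (e p) :
    Dv e (fun q => P q - Q q) p = Dv e P p - Dv e Q p := by
  simp only [Dv]
  rw [fderiv_fun_sub (hP.differentiable (by simp) p) (hQ.differentiable (by simp) p)]
  simp

lemma Dv_sq {P : Pt3 → ℝ} (hP : ContDiff ℝ (⊤ : ℕ∞) P) (e p) :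
    Dv e (fun q => P q ^ 2) p = 2 * P p * Dv e P p := by
  have h : (fun q => P q ^ 2) = fun q => P q * P q := funext fun q => sq (P q)
  rw [h, Dv_mul hP hP]; ring

lemma Dv_zero (e p) : Dv e (fun _ => (0:ℝ)) p = 0 := by simp [Dv]

/-- If the smooth nonvanishing potential `W(x,y,t)` satisfies `W_xy = 0`
together with the bilinear system `W W_ty = W_y W_t - W_xx W_y` and
`W W_tx = W W_xxx + W_x W_t - W_x W_xx`, then `u = -W_x/W` and `v = W_y/W` satisfy
`u_t = u_xx - 2u u_x` and `v_t = -v_xx + 2u u_y + 2(uv)_x`. -/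
theorem stmt8
    (W u v : ℝ → ℝ → ℝ → ℝ)
    (hW : ContDiff ℝ (⊤ : ℕ∞) ↿W)
    (hne : ∀ x y t, W x y t ≠ 0)
    (hxy : ∀ x y t, dx3 (dy3 W) x y t = 0)
    (hb1 : ∀ x y t, W x y t * dt3 (dy3 W) x y t
        = dy3 W x y t * dt3 W x y t - dx3 (dx3 W) x y t * dy3 W x y t)
    (hb2 : ∀ x y t, W x y t * dt3 (dx3 W) x y t
        = W x y t * dx3 (dx3 (dx3 W)) x y t
          + dx3 W x y t * dt3 W x y t - dx3 W x y t * dx3 (dx3 W) x y t)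
    (hu : ∀ x y t, u x y t = -(dx3 W x y t) / W x y t)
    (hv : ∀ x y t, v x y t = dy3 W x y t / W x y t) :
    (∀ x y t, dt3 u x y t = dx3 (dx3 u) x y t - 2 * u x y t * dx3 u x y t) ∧
    (∀ x y t, dt3 v x y t
        = -(dx3 (dx3 v) x y t) + 2 * u x y t * dy3 u x y t
          + 2 * dx3 (fun x y t => u x y t * v x y t) x y t) := by
  set F : Pt3 → ℝ := ↿W with hFdef
  have hFs : ContDiff ℝ (⊤ : ℕ∞) F := hW
  have hWF : ∀ x y t, W x y t = F (x,y,t) := fun _ _ _ => rfl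
  have hfne : ∀ p : Pt3, F p ≠ 0 := fun p => hne p.1 p.2.1 p.2.2
  set WX : Pt3 → ℝ := Dv (1,0,0) F with hWXdef
  set WY : Pt3 → ℝ := Dv (0,1,0) F with hWYdef
  have hWXs : ContDiff ℝ (⊤ : ℕ∞) WX := Dv_contDiff hFs _
  have hWYs : ContDiff ℝ (⊤ : ℕ∞) WY := Dv_contDiff hFs _
  have hWX : ∀ x y t, dx3 W x y t = WX (x,y,t) := dx3_eqD hFs hWF
  have hWY : ∀ x y t, dy3 W x y t = WY (x,y,t) := dy3_eqD hFs hWF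
  have hWT : ∀ x y t, dt3 W x y t = Dv (0,0,1) F (x,y,t) := dt3_eqD hFs hWF
  have hWXX : ∀ x y t, dx3 (dx3 W) x y t = Dv (1,0,0) WX (x,y,t) := dx3_eqD hWXs hWX
  have hWXXs : ContDiff ℝ (⊤ : ℕ∞) (Dv (1,0,0) WX) := Dv_contDiff hWXs _
  have hWXXX : ∀ x y t, dx3 (dx3 (dx3 W)) x y t = Dv (1,0,0) (Dv (1,0,0) WX) (x,y,t) :=
    dx3_eqD hWXXs hWXX
  have hWXT : ∀ x y t, dt3 (dx3 W) x y t = Dv (0,0,1) WX (x,y,t) := dt3_eqD hWXs hWX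
  have hWYT : ∀ x y t, dt3 (dy3 W) x y t = Dv (0,0,1) WY (x,y,t) := dt3_eqD hWYs hWY
  -- vanishing mixed derivatives
  have hYXfun : Dv (1,0,0) WY = fun _ => (0:ℝ) := by
    funext p
    have h1 := dx3_eqD hWYs hWY p.1 p.2.1 p.2.2
    have h2 := hxy p.1 p.2.1 p.2.2
    rw [h1] at h2; exact h2
  have hYX0 : ∀ p, Dv (1,0,0) WY p = 0 := fun p => by rw [hYXfun]
  have hXY0 : ∀ p, Dv (0,1,0) WX p = 0 := fun p => by
    rw [hWXdef, Dv_comm hFs, ← hWYdef, hYX0]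
  have hYXX0 : ∀ p, Dv (1,0,0) (Dv (1,0,0) WY) p = 0 := fun p => by
    rw [hYXfun]; exact Dv_zero _ _
  -- u and v as rational expressions
  set Pu : Pt3 → ℝ := fun q => -WX q with hPudef
  have hPus : ContDiff ℝ (⊤ : ℕ∞) Pu := hWXs.neg
  have hu' : ∀ x y t, u x y t = Pu (x,y,t) / F (x,y,t) := fun x y t => by
    rw [hu, hWX, hWF]
  have hv' : ∀ x y t, v x y t = WY (x,y,t) / F (x,y,t) := fun x y t => by
    rw [hv, hWY, hWF]
  -- first derivatives of u
  have hut : ∀ x y t, dt3 u x y t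
      = (Dv (0,0,1) Pu (x,y,t) * F (x,y,t) - Pu (x,y,t) * Dv (0,0,1) F (x,y,t)) / F (x,y,t) ^ 2 :=
    dt3_rat hPus hFs hfne hu'
  have hux : ∀ x y t, dx3 u x y t
      = (Dv (1,0,0) Pu (x,y,t) * F (x,y,t) - Pu (x,y,t) * Dv (1,0,0) F (x,y,t)) / F (x,y,t) ^ 2 :=
    dx3_rat hPus hFs hfne hu'
  have huy : ∀ x y t, dy3 u x y t
      = (Dv (0,1,0) Pu (x,y,t) * F (x,y,t) - Pu (x,y,t) * Dv (0,1,0) F (x,y,t)) / F (x,y,t) ^ 2 :=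
    dy3_rat hPus hFs hfne hu'
  -- second x-derivative of u
  set Nu : Pt3 → ℝ := fun q => Dv (1,0,0) Pu q * F q - Pu q * Dv (1,0,0) F q with hNudef
  have hNus : ContDiff ℝ (⊤ : ℕ∞) Nu :=
    ((Dv_contDiff hPus _).mul hFs).sub (hPus.mul (Dv_contDiff hFs _))
  set F2 : Pt3 → ℝ := fun q => F q ^ 2 with hF2def
  have hF2s : ContDiff ℝ (⊤ : ℕ∞) F2 := hFs.pow 2
  have hF2ne : ∀ q, F2 q ≠ 0 := fun q => pow_ne_zero _ (hfne q)
  have hux2 : ∀ x y t, dx3 u x y t = Nu (x,y,t) / F2 (x,y,t) := hux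
  have huxx : ∀ x y t, dx3 (dx3 u) x y t
      = (Dv (1,0,0) Nu (x,y,t) * F2 (x,y,t) - Nu (x,y,t) * Dv (1,0,0) F2 (x,y,t)) / F2 (x,y,t) ^ 2 :=
    dx3_rat hNus hF2s hF2ne hux2
  -- derivatives of v
  have hvt : ∀ x y t, dt3 v x y t
      = (Dv (0,0,1) WY (x,y,t) * F (x,y,t) - WY (x,y,t) * Dv (0,0,1) F (x,y,t)) / F (x,y,t) ^ 2 :=
    dt3_rat hWYs hFs hfne hv'
  have hvx : ∀ x y t, dx3 v x y t
      = (Dv (1,0,0) WY (x,y,t) * F (x,y,t) - WY (x,y,t) * Dv (1,0,0) F (x,y,t)) / F (x,y,t) ^ 2 :=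
    dx3_rat hWYs hFs hfne hv'
  set Nv : Pt3 → ℝ := fun q => Dv (1,0,0) WY q * F q - WY q * Dv (1,0,0) F q with hNvdef
  have hNvs : ContDiff ℝ (⊤ : ℕ∞) Nv :=
    ((Dv_contDiff hWYs _).mul hFs).sub (hWYs.mul (Dv_contDiff hFs _))
  have hvx2 : ∀ x y t, dx3 v x y t = Nv (x,y,t) / F2 (x,y,t) := hvx
  have hvxx : ∀ x y t, dx3 (dx3 v) x y t
      = (Dv (1,0,0) Nv (x,y,t) * F2 (x,y,t) - Nv (x,y,t) * Dv (1,0,0) F2 (x,y,t)) / F2 (x,y,t) ^ 2 :=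
    dx3_rat hNvs hF2s hF2ne hvx2
  -- derivative of u*v
  set Puv : Pt3 → ℝ := fun q => Pu q * WY q with hPuvdef
  have hPuvs : ContDiff ℝ (⊤ : ℕ∞) Puv := hPus.mul hWYs
  have huv : ∀ x y t, u x y t * v x y t = Puv (x,y,t) / F2 (x,y,t) := fun x y t => by
    rw [hu' x y t, hv' x y t, hPuvdef, hF2def]
    field_simp
  have huvx : ∀ x y t, dx3 (fun x y t => u x y t * v x y t) x y t
      = (Dv (1,0,0) Puv (x,y,t) * F2 (x,y,t) - Puv (x,y,t) * Dv (1,0,0) F2 (x,y,t)) / F2 (x,y,t) ^ 2 :=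
    dx3_rat hPuvs hF2s hF2ne huv
  -- expansions of Dv on composite functions
  have hPuXfun : Dv (1,0,0) Pu = fun q => -(Dv (1,0,0) WX q) := funext fun p => Dv_neg _ _
  have hDNu : ∀ p, Dv (1,0,0) Nu p
      = (-(Dv (1,0,0) (Dv (1,0,0) WX) p) * F p + (-(Dv (1,0,0) WX p)) * WX p)
        - ((-(Dv (1,0,0) WX p)) * WX p + Pu p * Dv (1,0,0) WX p) := by
    intro p
    rw [hNudef]
    rw [Dv_sub ((Dv_contDiff hPus _).mul hFs) (hPus.mul (Dv_contDiff hFs _)) _ p,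
        Dv_mul (Dv_contDiff hPus _) hFs _ p, Dv_mul hPus (Dv_contDiff hFs _) _ p]
    rw [show Dv (1,0,0) (Dv (1,0,0) Pu) p = -(Dv (1,0,0) (Dv (1,0,0) WX) p) by
      rw [hPuXfun]
      exact Dv_neg _ _]
    rw [hPuXfun]
  have hDNv : ∀ p, Dv (1,0,0) Nv p
      = (Dv (1,0,0) (Dv (1,0,0) WY) p * F p + Dv (1,0,0) WY p * WX p)
        - (Dv (1,0,0) WY p * WX p + WY p * Dv (1,0,0) WX p) := by
    intro p
    rw [hNvdef]
    rw [Dv_sub ((Dv_contDiff hWYs _).mul hFs) (hWYs.mul (Dv_contDiff hFs _)) _ p,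
        Dv_mul (Dv_contDiff hWYs _) hFs _ p, Dv_mul hWYs (Dv_contDiff hFs _) _ p]
  have hDPuv : ∀ p, Dv (1,0,0) Puv p
      = -(Dv (1,0,0) WX p) * WY p + Pu p * Dv (1,0,0) WY p := by
    intro p
    rw [hPuvdef, Dv_mul hPus hWYs _ p, hPuXfun]
  have hPuD : ∀ (e : Pt3) p, Dv e Pu p = -(Dv e WX p) := fun e p => Dv_neg _ _
  have hDF2 : ∀ (e : Pt3) p, Dv e F2 p = 2 * F p * Dv e F p := fun e p => Dv_sq hFs e p
  have hPuval : ∀ p : Pt3, Pu p = -WX p := fun _ => rfl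
  have hNuval : ∀ p : Pt3, Nu p = -(Dv (1,0,0) WX p) * F p - (-WX p) * WX p := by
    intro p
    simp only [hNudef]
    rw [hPuD, hPuval, ← hWXdef]
  have hNvval : ∀ p : Pt3, Nv p = Dv (1,0,0) WY p * F p - WY p * WX p := by
    intro p
    simp only [hNvdef]
    rfl
  have hPuvval : ∀ p : Pt3, Puv p = -WX p * WY p := fun _ => rfl
  have hF2val : ∀ p : Pt3, F2 p = F p ^ 2 := fun _ => rfl
  constructor
  · intro x y t
    have hb2' := hb2 x y t
    rw [hWF, hWXT, hWXXX, hWX, hWT, hWXX] at hb2'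
    rw [hut, huxx, hu', hux, hDNu (x,y,t), hNuval, hDF2, hF2val, hPuD, hPuD, hPuval, ← hWXdef]
    have h0 := hfne (x,y,t)
    field_simp
    linear_combination (-(F (x,y,t))) * hb2'
  · intro x y t
    have hb1' := hb1 x y t
    rw [hWF, hWYT, hWY, hWT, hWXX] at hb1'
    rw [hvt, hvxx, huvx, hu', huy, hDNv (x,y,t), hNvval, hDPuv (x,y,t), hPuvval, hDF2, hF2val,
        hPuD, hPuval, ← hWXdef, ← hWYdef]
    rw [hYX0, hYXX0, hXY0]
    have h0 := hfne (x,y,t)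
    field_simp
    linear_combination (F (x,y,t)) * hb1'
end
end
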